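/- Every 2×2 density matrix ρ admits a pure state decomposition {(p_k, ψ_k)} such that |ψ_k(i)|² = ρ_ii for every k and i. Consequently, for every function f : ℝ² → ℝ that is symmetric and concave on the probability simplex Ω₂, the maximum of the average coherence over all pure state decompositions of ρ equals f(ρ₀₀, ρ₁₁). (Corollary, two-dimensional case.) -/

import Mathlib

open Matrix BigOperators
open scoped ComplexOrder

noncomputable section

/-- A symmetric function: invariant under all coordinate permutations. -/
def SymmetricFn {n : ℕ} (f : (Fin n → ℝ) → ℝ) : Prop :=
  ∀ (σ : Equiv.Perm (Fin n)) (x : Fin n → ℝ), f (x ∘ σ) = f x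

/-- A density matrix: positive semidefinite with trace one. -/
def IsDensityMatrix {n : ℕ} (ρ : Matrix (Fin n) (Fin n) ℂ) : Prop :=
  ρ.PosSemidef ∧ ρ.trace = 1

/-- The rank-one projection `ψ ψ*` associated to a vector `ψ ∈ ℂⁿ`. -/
def outer {n : ℕ} (ψ : Fin n → ℂ) : Matrix (Fin n) (Fin n) ℂ :=
  Matrix.vecMulVec ψ (fun i => starRingEnd ℂ (ψ i))

/-- `(p, ψ)` is a pure state decomposition of `ρ`. -/
def IsDecomposition {n m : ℕ} (ρ : Matrix (Fin n) (Fin n) ℂ)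
    (p : Fin m → ℝ) (ψ : Fin m → Fin n → ℂ) : Prop :=
  (∀ k, 0 ≤ p k) ∧ (∑ k, p k = 1) ∧ (∀ k, ∑ i, ‖ψ k i‖ ^ 2 = 1) ∧
    ρ = ∑ k, (p k : ℂ) • outer (ψ k)

/-- The coherence vector `(|ψ₀|², …, |ψ_{n-1}|²)` of a vector `ψ`. -/
def cohVec {n : ℕ} (ψ : Fin n → ℂ) : Fin n → ℝ := fun i => ‖ψ i‖ ^ 2

/-- The average coherence of a pure state decomposition with respect to `f`. -/
def avgCoh {n m : ℕ} (f : (Fin n → ℝ) → ℝ) (p : Fin m → ℝ)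
    (ψ : Fin m → Fin n → ℂ) : ℝ :=
  ∑ k, p k * f (cohVec (ψ k))

/-!
Write `a = ρ₀₀`, `b = ρ₁₁`. Positivity of `det ρ` gives `|ρ₁₀|² ≤ a b`, so `ρ₁₀ = √a w` with
`|w| ≤ √b`. Such a `w` is the midpoint of two points `y₀, y₁` of the circle of radius `√b`, and
then `ρ` is the equal mixture of the pure states `(√a, y₀)` and `(√a, y₁)`, both of which have
coherence vector `(a, b)`. Conversely, for any decomposition the diagonal of `ρ` is the weighted
mean of the coherence vectors of its states, so Jensen's inequality bounds every average
coherence by `f (a, b)`.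
-/

open Complex in
theorem Complex.exists_norm_eq_add_eq_two_mul {r : ℝ} {w : ℂ} (hw : ‖w‖ ≤ r) :
    ∃ u v : ℂ, ‖u‖ = r ∧ ‖v‖ = r ∧ u + v = 2 * w := by
  have hr : 0 ≤ r := (norm_nonneg w).trans hw
  set d := √(r ^ 2 - ‖w‖ ^ 2)
  have hd : d ^ 2 = r ^ 2 - ‖w‖ ^ 2 := Real.sq_sqrt (by nlinarith [norm_nonneg w])
  -- rotate the two points `‖w‖ ± d i` of the circle of radius `r` onto the direction of `w`
  have hnorm : ∀ s : ℝ, s ^ 2 = d ^ 2 → ‖(‖w‖ + s * I) * exp (arg w * I)‖ = r := by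
    intro s hs
    rw [norm_mul, norm_exp_ofReal_mul_I, mul_one, ← sq_eq_sq₀ (norm_nonneg _) hr,
      Complex.sq_norm, normSq_add_mul_I]
    linarith
  refine ⟨_, _, hnorm d rfl, hnorm (-d) (neg_sq d), ?_⟩
  push_cast
  linear_combination 2 * norm_mul_exp_arg_mul_I w

section Decomposition

variable {n m : ℕ} {ρ : Matrix (Fin n) (Fin n) ℂ} {p : Fin m → ℝ} {ψ : Fin m → Fin n → ℂ}

lemma outer_apply_self (φ : Fin n → ℂ) (i : Fin n) : outer φ i i = ((‖φ i‖ ^ 2 : ℝ) : ℂ) := by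
  rw [outer, vecMulVec_apply, Complex.mul_conj, Complex.normSq_eq_norm_sq]

lemma cohVec_mem_stdSimplex {φ : Fin n → ℂ} (hφ : ∑ i, ‖φ i‖ ^ 2 = 1) :
    cohVec φ ∈ stdSimplex ℝ (Fin n) :=
  ⟨fun _ => sq_nonneg _, hφ⟩

lemma IsDecomposition.re_diag_eq_sum (h : IsDecomposition ρ p ψ) :
    (fun i => (ρ i i).re) = ∑ k, p k • cohVec (ψ k) := by
  funext i
  rw [h.2.2.2, Matrix.sum_apply, Complex.re_sum, Finset.sum_apply]
  refine Finset.sum_congr rfl fun k _ => ?_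
  rw [Matrix.smul_apply, outer_apply_self, smul_eq_mul, ← Complex.ofReal_mul, Complex.ofReal_re,
    Pi.smul_apply, cohVec, smul_eq_mul]

lemma IsDecomposition.avgCoh_le {f : (Fin n → ℝ) → ℝ} (hf : ConcaveOn ℝ (stdSimplex ℝ (Fin n)) f)
    (h : IsDecomposition ρ p ψ) : avgCoh f p ψ ≤ f (fun i => (ρ i i).re) := by
  rw [h.re_diag_eq_sum]
  exact hf.le_map_sum (fun k _ => h.1 k) h.2.1 (fun k _ => cohVec_mem_stdSimplex (h.2.2.1 k))

lemma avgCoh_eq_of_cohVec_eq (f : (Fin n → ℝ) → ℝ) {v : Fin n → ℝ} (hp : ∑ k, p k = 1)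
    (hψ : ∀ k, cohVec (ψ k) = v) : avgCoh f p ψ = f v := by
  simp only [avgCoh, hψ, ← Finset.sum_mul, hp, one_mul]

end Decomposition

namespace Matrix.PosSemidef

section

variable {n : Type*} {ρ : Matrix n n ℂ}

lemma ofReal_re_apply_self (hρ : ρ.PosSemidef) (i : n) : ((ρ i i).re : ℂ) = ρ i i :=
  (Complex.eq_re_of_ofReal_le hρ.diag_nonneg).symm

lemma re_apply_self_nonneg (hρ : ρ.PosSemidef) (i : n) : 0 ≤ (ρ i i).re :=
  (Complex.nonneg_iff.1 hρ.diag_nonneg).1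

end

section

variable {ρ : Matrix (Fin 2) (Fin 2) ℂ}

lemma norm_sq_apply_one_zero_le (hρ : ρ.PosSemidef) :
    ‖ρ 1 0‖ ^ 2 ≤ (ρ 0 0).re * (ρ 1 1).re := by
  have hdet := (Complex.nonneg_iff.1 hρ.det_nonneg).1
  rw [det_fin_two, ← hρ.isHermitian.apply 0 1, ← hρ.ofReal_re_apply_self 0,
    ← hρ.ofReal_re_apply_self 1, Complex.star_def, Complex.conj_mul'] at hdet
  simpa [← Complex.ofReal_pow] using hdet

lemma exists_norm_le_sqrt_mul_eq (hρ : ρ.PosSemidef) :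
    ∃ w : ℂ, ‖w‖ ≤ √(ρ 1 1).re ∧ (√(ρ 0 0).re : ℂ) * w = ρ 1 0 := by
  set a := (ρ 0 0).re
  set b := (ρ 1 1).re
  have ha : 0 ≤ a := hρ.re_apply_self_nonneg 0
  have hc : ‖ρ 1 0‖ ^ 2 ≤ a * b := hρ.norm_sq_apply_one_zero_le
  refine ⟨ρ 1 0 / √a, ?_, ?_⟩
  · rw [Real.le_sqrt (norm_nonneg _) (hρ.re_apply_self_nonneg 1), norm_div,
      Complex.norm_of_nonneg (Real.sqrt_nonneg a), div_pow, Real.sq_sqrt ha]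
    exact div_le_of_le_mul₀ ha (hρ.re_apply_self_nonneg 1) (by linarith)
  · rcases ha.eq_or_lt with ha0 | ha0
    · have h0 : ‖ρ 1 0‖ ^ 2 = 0 := le_antisymm (by simpa [← ha0] using hc) (sq_nonneg _)
      simp [← ha0, norm_eq_zero.1 (pow_eq_zero_iff two_ne_zero |>.1 h0)]
    · exact mul_div_cancel₀ _ (by exact_mod_cast (Real.sqrt_pos.2 ha0).ne')

lemma eq_sum_half_smul_outer (hρ : ρ.PosSemidef) {y₀ y₁ : ℂ} (hy₀ : ‖y₀‖ ^ 2 = (ρ 1 1).re)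
    (hy₁ : ‖y₁‖ ^ 2 = (ρ 1 1).re) (hy : (√(ρ 0 0).re : ℂ) * (y₀ + y₁) = 2 * ρ 1 0) :
    ρ = ∑ k, ((1 / 2 : ℝ) : ℂ) •
      outer (![![(√(ρ 0 0).re : ℂ), y₀], ![(√(ρ 0 0).re : ℂ), y₁]] k) := by
  have hsa : (√(ρ 0 0).re : ℂ) * √(ρ 0 0).re = (ρ 0 0).re := by
    exact_mod_cast Real.mul_self_sqrt (hρ.re_apply_self_nonneg 0)
  ext i j
  simp only [Matrix.sum_apply, Fin.sum_univ_two, Matrix.smul_apply, outer, vecMulVec_apply,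
    smul_eq_mul, Complex.ofReal_div, Complex.ofReal_one, Complex.ofReal_ofNat]
  fin_cases i <;> fin_cases j <;>
    simp only [Fin.zero_eta, Fin.mk_one, Fin.isValue, cons_val', cons_val_zero, cons_val_one,
      cons_val_fin_one, Complex.conj_ofReal]
  · rw [← hρ.ofReal_re_apply_self 0]
    linear_combination -hsa
  · have hy' : (√(ρ 0 0).re : ℂ) * (starRingEnd ℂ y₀ + starRingEnd ℂ y₁) = 2 * ρ 0 1 := by
      simpa [map_ofNat, ← hρ.isHermitian.apply 0 1] using congrArg (starRingEnd ℂ) hy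
    linear_combination -hy' / 2
  · linear_combination -hy / 2
  · rw [← hρ.ofReal_re_apply_self 1, Complex.mul_conj', Complex.mul_conj', ← Complex.ofReal_pow,
      ← Complex.ofReal_pow, hy₀, hy₁]
    ring

end

end Matrix.PosSemidef

theorem IsDensityMatrix.exists_isDecomposition_cohVec_eq_diag {ρ : Matrix (Fin 2) (Fin 2) ℂ}
    (hρ : IsDensityMatrix ρ) :
    ∃ (p : Fin 2 → ℝ) (ψ : Fin 2 → Fin 2 → ℂ),
      IsDecomposition ρ p ψ ∧ ∀ k, cohVec (ψ k) = fun i => (ρ i i).re := by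
  obtain ⟨hpsd, htr⟩ := hρ
  obtain ⟨w, hwb, hw⟩ := hpsd.exists_norm_le_sqrt_mul_eq
  obtain ⟨y₀, y₁, hy₀, hy₁, hy⟩ := Complex.exists_norm_eq_add_eq_two_mul hwb
  have hb := hpsd.re_apply_self_nonneg 1
  have hy₀' : ‖y₀‖ ^ 2 = (ρ 1 1).re := by rw [hy₀, Real.sq_sqrt hb]
  have hy₁' : ‖y₁‖ ^ 2 = (ρ 1 1).re := by rw [hy₁, Real.sq_sqrt hb]
  set ψ : Fin 2 → Fin 2 → ℂ := ![![(√(ρ 0 0).re : ℂ), y₀], ![(√(ρ 0 0).re : ℂ), y₁]]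
  have hcoh : ∀ k, cohVec (ψ k) = fun i => (ρ i i).re := by
    intro k
    funext i
    fin_cases k <;> fin_cases i <;>
      simp [cohVec, ψ, hy₀', hy₁', Real.sq_sqrt (hpsd.re_apply_self_nonneg 0)]
  refine ⟨fun _ => 1 / 2, ψ, ⟨fun _ => by norm_num, by norm_num, fun k => ?_,
    hpsd.eq_sum_half_smul_outer hy₀' hy₁' (by rw [hy, ← hw]; ring)⟩, hcoh⟩
  change ∑ i, cohVec (ψ k) i = 1
  simpa [hcoh k, Fin.sum_univ_two, trace_fin_two] using congrArg Complex.re htr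

/-- Corollary (two-dimensional case): every qubit density matrix admits a pure
state decomposition whose pure states all share the diagonal of `ρ`; hence for
every symmetric concave `f` the maximum of the average coherence over all pure
state decompositions equals `f(ρ₀₀, ρ₁₁)`. -/
theorem dim_two_max_avg_coherence (ρ : Matrix (Fin 2) (Fin 2) ℂ)
    (hρ : IsDensityMatrix ρ) :
    (∃ (m : ℕ) (p : Fin m → ℝ) (ψ : Fin m → Fin 2 → ℂ),
        IsDecomposition ρ p ψ ∧ ∀ k i, ‖ψ k i‖ ^ 2 = (ρ i i).re) ∧
    ∀ f : (Fin 2 → ℝ) → ℝ, SymmetricFn f → ConcaveOn ℝ (stdSimplex ℝ (Fin 2)) f →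
      IsGreatest {c : ℝ | ∃ (m : ℕ) (p : Fin m → ℝ) (ψ : Fin m → Fin 2 → ℂ),
          IsDecomposition ρ p ψ ∧ c = avgCoh f p ψ}
        (f (fun i => (ρ i i).re)) := by
  obtain ⟨p, ψ, hdec, hcoh⟩ := hρ.exists_isDecomposition_cohVec_eq_diag
  refine ⟨⟨2, p, ψ, hdec, fun k i => congrFun (hcoh k) i⟩, fun f _ hf => ⟨?_, ?_⟩⟩
  · exact ⟨2, p, ψ, hdec, (avgCoh_eq_of_cohVec_eq f hdec.2.1 hcoh).symm⟩
  · rintro c ⟨m, q, φ, hdec', rfl⟩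
    exact hdec'.avgCoh_le hf
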